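/- arXiv:cs/0606015 — 3 statements merged into one kernel-verified Lean document; each statement's English description precedes it below -/
import Mathlib

section
/- Let A be an N×N real symmetric matrix with eigenvalues λ₁ ≥ ⋯ ≥ λ_N, and let λ̂₁ ≥ ⋯ ≥ λ̂_N be real numbers satisfying λ̂₁ ≥ λ₁ ≥ λ̂₂ ≥ λ₂ ≥ ⋯ ≥ λ̂_N ≥ λ_N. Then there exists a real vector c ∈ ℝ^N such that the eigenvalues of A + ccᵀ are exactly λ̂₁, …, λ̂_N. -/
/-!
In an orthonormal eigenbasis of `A` the problem becomes: find `c` with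
`charpoly (diagonal λ + c cᵀ) = ∏ (X - λ̂ᵢ)`. By the matrix determinant lemma that
characteristic polynomial is `p - ∑ cᵢ² p / (X - λᵢ)` with `p = ∏ (X - λᵢ)`, so it suffices to
write `p - q`, `q = ∏ (X - λ̂ᵢ)`, as a nonnegative combination of the `p / (X - λᵢ)`.
On a set of indices where `λ` is injective, Lagrange interpolation at the nodes `λᵢ` gives the
weights `-q(λᵢ) / ∏_{j ≠ i} (λᵢ - λⱼ)`, which interlacing makes nonnegative. A repeated eigenvalue
`λₖ = λⱼ` (`j < k`) is squeezed by interlacing to `λ̂ₖ = λₖ`, so it only contributes a common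
factor `X - λₖ` of `p` and `q` and gets weight zero.
-/

open Polynomial Matrix Finset Lagrange

theorem Matrix.det_diagonal_add_vecMulVec {K ι : Type*} [Field K] [Fintype ι] [DecidableEq ι]
    (g u w : ι → K) (hg : ∀ i, g i ≠ 0) :
    (diagonal g + vecMulVec u w).det = ∏ i, g i + ∑ i, u i * w i * ∏ j ∈ univ.erase i, g j := by
  have hfactor : diagonal g + vecMulVec u w = diagonal g * (1 + vecMulVec (u / g) w) := by
    rw [Matrix.mul_add, Matrix.mul_one, mul_vecMulVec]
    congr
    ext i
    simp [mulVec_diagonal, mul_div_cancel₀ _ (hg i)]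
  rw [hfactor, det_mul, det_diagonal, vecMulVec_eq Unit,
    det_one_add_replicateCol_mul_replicateRow, mul_add, mul_one, dotProduct, Finset.mul_sum]
  congr 1
  refine sum_congr rfl fun i _ => ?_
  rw [← mul_prod_erase _ _ (mem_univ i), Pi.div_apply]
  field_simp [hg i]

theorem Matrix.charpoly_diagonal_add_vecMulVec {R ι : Type*} [CommRing R] [IsDomain R]
    [Fintype ι] [DecidableEq ι] (d u w : ι → R) :
    (diagonal d + vecMulVec u w).charpoly
      = nodal univ d - ∑ i, C (u i * w i) * nodal (univ.erase i) d := by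
  let φ := algebraMap R[X] (FractionRing R[X])
  have hφ : Function.Injective φ := IsFractionRing.injective R[X] (FractionRing R[X])
  have hcharmatrix : (charmatrix (diagonal d + vecMulVec u w)).map φ
      = diagonal (fun i => φ (X - C (d i)))
        + vecMulVec (fun i => -φ (C (u i))) (fun i => φ (C (w i))) := by
    refine Matrix.ext fun i j => ?_
    by_cases h : i = j
    · subst h
      simp only [map_apply, charmatrix_apply_eq, Matrix.add_apply, diagonal_apply_eq,
        vecMulVec_apply, map_add, map_mul, map_sub, neg_mul]
      ring
    · simp [vecMulVec_apply, h]
  apply hφ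
  rw [charpoly, RingHom.map_det, RingHom.mapMatrix_apply, hcharmatrix,
    det_diagonal_add_vecMulVec _ _ _ fun i => (map_ne_zero_iff φ hφ).mpr (X_sub_C_ne_zero _)]
  simp [nodal, map_prod, sub_eq_add_neg]

namespace Lagrange

theorem nodal_sub_eq_sum_nodalWeight_mul_nodal_erase {F ι : Type*} [Field F] [DecidableEq ι]
    {s : Finset ι} {v : ι → F} (hvs : Set.InjOn v s) {p : F[X]} (hp : p.Monic)
    (hdeg : p.natDegree = #s) :
    nodal s v - p = ∑ i ∈ s, C (-p.eval (v i) * nodalWeight s v i) * nodal (s.erase i) v := by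
  have hlt : (nodal s v - p).degree < #s := by
    rw [← degree_nodal (v := v)]
    exact degree_sub_lt_left (by rw [degree_nodal, degree_eq_natDegree hp.ne_zero, hdeg])
      nodal_ne_zero (by rw [nodal_monic.leadingCoeff, hp.leadingCoeff])
  conv_lhs => rw [eq_interpolate hvs hlt, interpolate_apply]
  refine sum_congr rfl fun i hi => ?_
  rw [eval_sub, eval_nodal_at_node hi, zero_sub, basis_eq_prod_sub_inv_mul_nodal_div hi,
    ← nodal_erase_eq_nodal_div hi, C_mul, mul_assoc]

theorem nodal_univ_sub_sum_eq_nodal_compl_mul {R ι : Type*} [CommRing R] [Fintype ι]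
    [DecidableEq ι] (s : Finset ι) (v w : ι → R) :
    nodal univ v - ∑ i ∈ s, C (w i) * nodal (univ.erase i) v
      = nodal sᶜ v * (nodal s v - ∑ i ∈ s, C (w i) * nodal (s.erase i) v) := by
  have hsplit : ∀ i ∈ s, nodal (univ.erase i) v = nodal sᶜ v * nodal (s.erase i) v := by
    intro i hi
    rw [nodal, nodal, nodal, ← prod_sdiff (erase_subset_erase i (subset_univ s))]
    congr 2
    ext j
    by_cases hj : j = i <;> simp [hj, hi]
  rw [sum_congr rfl fun i hi => by rw [hsplit i hi, mul_left_comm], ← mul_sum, mul_sub, nodal,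
    nodal, nodal, prod_compl_mul_prod]

theorem roots_nodal {R ι : Type*} [CommRing R] [IsDomain R] (s : Finset ι) (v : ι → R) :
    (nodal s v).roots = s.val.map v := by
  rw [nodal, roots_prod _ _ nodal_ne_zero]
  simp

end Lagrange

section Interlacing

variable {ι : Type*} [LinearOrder ι] {lam lhat : ι → ℝ}

theorem neg_eval_nodal_mul_nodalWeight_nonneg (hle : ∀ i, lam i ≤ lhat i)
    (hlt : ∀ ⦃i j⦄, i < j → lhat j ≤ lam i) (s : Finset ι) {i : ι} (hi : i ∈ s) :
    0 ≤ -(nodal s lhat).eval (lam i) * nodalWeight s lam i := by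
  have hfactor : -(nodal s lhat).eval (lam i) * nodalWeight s lam i
      = (lhat i - lam i) * ∏ j ∈ s.erase i, (lam i - lhat j) * (lam i - lam j)⁻¹ := by
    rw [eval_nodal, ← mul_prod_erase _ _ hi, nodalWeight, prod_mul_distrib]
    ring
  rw [hfactor]
  refine mul_nonneg (sub_nonneg.2 (hle i)) (prod_nonneg fun j hj => ?_)
  rcases (ne_of_mem_erase hj).lt_or_gt with hji | hij
  · exact mul_nonneg_of_nonpos_of_nonpos (by linarith [hle i, hle j, hlt hji])
      (inv_nonpos.2 (by linarith [hle i, hlt hji]))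
  · exact mul_nonneg (by linarith [hlt hij]) (inv_nonneg.2 (by linarith [hle j, hlt hij]))

theorem exists_injOn_and_eq_of_notMem [Fintype ι] (hle : ∀ i, lam i ≤ lhat i)
    (hlt : ∀ ⦃i j⦄, i < j → lhat j ≤ lam i) :
    ∃ s : Finset ι, Set.InjOn lam s ∧ ∀ k ∉ s, lhat k = lam k := by
  refine ⟨univ.filter fun i => ∀ j < i, lam j ≠ lam i, fun i hi j hj hij => ?_, fun k hk => ?_⟩
  · simp only [coe_filter, mem_univ, true_and, Set.mem_ofPred_eq] at hi hj
    by_contra hne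
    rcases lt_or_gt_of_ne hne with h | h
    · exact hj i h hij
    · exact hi j h hij.symm
  · simp only [mem_filter, mem_univ, true_and, not_forall, not_not] at hk
    obtain ⟨j, hjk, hj⟩ := hk
    exact le_antisymm (hj ▸ hlt hjk) (hle k)

theorem exists_charpoly_diagonal_add_vecMulVec_eq_nodal [Fintype ι] (hle : ∀ i, lam i ≤ lhat i)
    (hlt : ∀ ⦃i j⦄, i < j → lhat j ≤ lam i) :
    ∃ c : ι → ℝ, (diagonal lam + vecMulVec c c).charpoly = nodal univ lhat := by
  obtain ⟨s, hinj, hfix⟩ := exists_injOn_and_eq_of_notMem hle hlt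
  set w : ι → ℝ := fun i => -(nodal s lhat).eval (lam i) * nodalWeight s lam i
  have hw : ∀ i ∈ s, 0 ≤ w i := fun i hi => neg_eval_nodal_mul_nodalWeight_nonneg hle hlt s hi
  set c : ι → ℝ := fun i => if i ∈ s then √(w i) else 0
  have hsum : ∑ i, C (c i * c i) * nodal (univ.erase i) lam
      = ∑ i ∈ s, C (w i) * nodal (univ.erase i) lam := by
    rw [← sum_subset (subset_univ s) fun i _ hi => by simp [c, hi]]
    exact sum_congr rfl fun i hi => by simp [c, hi, Real.mul_self_sqrt (hw i hi)]
  have hcompl : nodal sᶜ lam = nodal sᶜ lhat :=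
    prod_congr rfl fun k hk => by rw [hfix k (mem_compl.1 hk)]
  refine ⟨c, ?_⟩
  rw [charpoly_diagonal_add_vecMulVec, hsum, nodal_univ_sub_sum_eq_nodal_compl_mul,
    ← nodal_sub_eq_sum_nodalWeight_mul_nodal_erase hinj nodal_monic natDegree_nodal,
    sub_sub_cancel, hcompl, nodal, nodal, prod_compl_mul_prod, nodal]

end Interlacing

theorem Antitone.le_of_lt_of_succ_le {α : Type*} [Preorder α] {n : ℕ} {f g : Fin n → α}
    (hf : Antitone f) (hfg : ∀ i j : Fin n, (i : ℕ) + 1 = (j : ℕ) → f j ≤ g i) {i j : Fin n}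
    (hij : i < j) : f j ≤ g i :=
  (hf (show (⟨i + 1, by omega⟩ : Fin n) ≤ j from hij)).trans (hfg i _ rfl)

theorem Fintype.exists_perm_eq_comp_of_map_eq {ι α : Type*} [Fintype ι] [DecidableEq α]
    {f g : ι → α} (h : univ.val.map f = univ.val.map g) : ∃ σ : Equiv.Perm ι, f = g ∘ σ := by
  have hfiber : ∀ a, Fintype.card {i // f i = a} = Fintype.card {i // g i = a} := by
    intro a
    have := congrArg (Multiset.count a) h
    simp only [Multiset.count_map] at this
    simpa [Fintype.card_subtype, Finset.card_def, Finset.filter_val, eq_comm] using this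
  exact ⟨Equiv.ofFiberEquiv fun a => Fintype.equivOfCardEq (hfiber a),
    funext fun i => (Equiv.ofFiberEquiv_map _ i).symm⟩

theorem Matrix.IsSymm.exists_unitary_eq_mul_diagonal_comp_mul_star {n : Type*} [Fintype n]
    [DecidableEq n] {A : Matrix n n ℝ} (hA : A.IsSymm) {lam : n → ℝ}
    (hcp : A.charpoly = ∏ i, (X - C (lam i))) :
    ∃ (U : unitaryGroup n ℝ) (σ : Equiv.Perm n),
      A = U * diagonal (lam ∘ σ) * star (U : Matrix n n ℝ) := by
  have hH : A.IsHermitian := isHermitian_iff_isSymm.2 hA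
  obtain ⟨σ, hσ⟩ : ∃ σ : Equiv.Perm n, hH.eigenvalues = lam ∘ σ := by
    refine Fintype.exists_perm_eq_comp_of_map_eq ?_
    rw [← roots_nodal, ← roots_nodal, nodal, nodal, ← hcp, hH.charpoly_eq]
    simp
  refine ⟨hH.eigenvectorUnitary, σ, ?_⟩
  simpa [← hσ] using hH.spectral_theorem

theorem Matrix.charpoly_unitary_conj_add_vecMulVec {R n : Type*} [CommRing R] [StarRing R]
    [TrivialStar R] [Fintype n] [DecidableEq n] (U : unitaryGroup n R) (M : Matrix n n R)
    (c : n → R) :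
    ((U : Matrix n n R) * M * star (U : Matrix n n R)
        + vecMulVec ((U : Matrix n n R) *ᵥ c) ((U : Matrix n n R) *ᵥ c)).charpoly
      = (M + vecMulVec c c).charpoly := by
  have hvec : vecMulVec ((U : Matrix n n R) *ᵥ c) ((U : Matrix n n R) *ᵥ c)
      = U * vecMulVec c c * star (U : Matrix n n R) := by
    rw [Matrix.mul_assoc, vecMulVec_mul, mul_vecMulVec, star_eq_conjTranspose,
      conjTranspose_eq_transpose_of_trivial, vecMul_transpose]
  rw [hvec, ← Matrix.add_mul, ← Matrix.mul_add, charpoly_mul_comm, ← Matrix.mul_assoc,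
    Unitary.coe_star_mul_self, Matrix.one_mul]

theorem Matrix.charpoly_diagonal_comp_add_vecMulVec_comp {R ι : Type*} [CommRing R] [Fintype ι]
    [DecidableEq ι] (σ : Equiv.Perm ι) (d u w : ι → R) :
    (diagonal (d ∘ σ) + vecMulVec (u ∘ σ) (w ∘ σ)).charpoly
      = (diagonal d + vecMulVec u w).charpoly := by
  rw [← charpoly_reindex σ.symm (diagonal d + vecMulVec u w)]
  congr
  ext i j
  simp [diagonal_apply]

theorem converse_weyl_real_general (N : ℕ) (A : Matrix (Fin N) (Fin N) ℝ)
    (hA : A.IsSymm) (lam lhat : Fin N → ℝ)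
    (hcp : A.charpoly = ∏ i : Fin N, (X - C (lam i)))
    (hlhat : Antitone lhat)
    (h₁ : ∀ i : Fin N, lam i ≤ lhat i)
    (h₂ : ∀ i j : Fin N, (i : ℕ) + 1 = (j : ℕ) → lhat j ≤ lam i) :
    ∃ c : Fin N → ℝ,
      (A + Matrix.vecMulVec c c).charpoly
        = ∏ i : Fin N, (X - C (lhat i)) := by
  obtain ⟨U, σ, rfl⟩ := hA.exists_unitary_eq_mul_diagonal_comp_mul_star hcp
  obtain ⟨c, hc⟩ := exists_charpoly_diagonal_add_vecMulVec_eq_nodal h₁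
    fun _ _ => hlhat.le_of_lt_of_succ_le h₂
  refine ⟨(U : Matrix (Fin N) (Fin N) ℝ) *ᵥ (c ∘ σ), ?_⟩
  rw [charpoly_unitary_conj_add_vecMulVec, charpoly_diagonal_comp_add_vecMulVec_comp, hc]
  rfl

/-- Real version of the converse to Weyl's interlacing theorem: a real symmetric
matrix admits a real rank-one perturbation realizing any interlacing spectrum. -/
theorem converse_weyl_real (N : ℕ) (A : Matrix (Fin N) (Fin N) ℝ)
    (hA : A.IsSymm) (lam lhat : Fin N → ℝ)
    (hcp : A.charpoly = ∏ i : Fin N, (X - C (lam i)))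
    (hlam : Antitone lam) (hlhat : Antitone lhat)
    (h₁ : ∀ i : Fin N, lam i ≤ lhat i)
    (h₂ : ∀ i j : Fin N, (i : ℕ) + 1 = (j : ℕ) → lhat j ≤ lam i) :
    ∃ c : Fin N → ℝ,
      (A + Matrix.vecMulVec c c).charpoly
        = ∏ i : Fin N, (X - C (lhat i)) :=
  converse_weyl_real_general N A hA lam lhat hcp hlhat h₁ h₂
end

section
/- Let x₁, …, x_K be strictly positive reals with total x_tot = Σ_k x_k, and suppose N·x_k ≤ x_tot for every k (no oversized user). Then there exists a finite multiset x' of strictly positive reals of size K' with K ≤ K' ≤ K + N − 1, obtained from x by replacing at most N−1 of the x_k each by two positive numbers summing to x_k, such that x' admits a partition into N subsets each of whose elementwise sums equals x_tot/N. -/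
/-!
Lay the users end to end on `[0, x_tot]`, user `k` occupying `[s k, s (k + 1)]` with `s` the
partial sums, and cut `[0, x_tot]` into the `N` bins `[n c, (n + 1) c]`, `c = x_tot / N`. The
virtual users are the nonempty pieces `[s k, s (k + 1)] ∩ [n c, (n + 1) c]`, piece `(k, n)` going
to bin `n`: the pieces of a user add up to its length and those of a bin to `c` (both sums
telescope). No user is longer than a bin, so each meets at most two bins; and distinct pieces
have distinct left endpoints, all among the `K + N - 1` points `s 0, …, s (K - 1), c, …, (N - 1) c`.
-/

open Finset

def overlap (a b c d : ℝ) : ℝ := max 0 (min b d - max a c)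

lemma overlap_nonneg (a b c d : ℝ) : 0 ≤ overlap a b c d := le_max_left _ _

lemma overlap_comm (a b c d : ℝ) : overlap a b c d = overlap c d a b := by
  rw [overlap, overlap, min_comm, max_comm a]

lemma overlap_pos_iff {a b c d : ℝ} : 0 < overlap a b c d ↔ max a c < min b d := by
  simp only [overlap, lt_max_iff, lt_irrefl, false_or, sub_pos]

lemma overlap_eq_clamp_sub_clamp {a b c d : ℝ} (hab : a ≤ b) (hcd : c ≤ d) :
    overlap a b c d = max a (min b d) - max a (min b c) := by
  simp only [overlap, max_def, min_def]
  split_ifs <;> linarith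

lemma sum_range_overlap {v : ℕ → ℝ} (hv : Monotone v) {a b : ℝ} (hab : a ≤ b)
    {N : ℕ} (ha : v 0 ≤ a) (hb : b ≤ v N) :
    ∑ j ∈ range N, overlap a b (v j) (v (j + 1)) = b - a := by
  rw [sum_congr rfl fun j _ => overlap_eq_clamp_sub_clamp hab (hv j.le_succ),
    sum_range_sub (fun j => max a (min b (v j))), min_eq_left hb, max_eq_right hab,
    min_eq_right (ha.trans hab), max_eq_left ha]

lemma sum_overlap_eq_sub {K N : ℕ} {u v : ℕ → ℝ} (hu : Monotone u) (hv : Monotone v)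
    (h0 : u 0 = v 0) (hK : u K = v N) (k : Fin K) :
    ∑ n : Fin N, overlap (u k) (u (k + 1)) (v n) (v (n + 1)) = u (k + 1) - u k := by
  rw [Fin.sum_univ_eq_sum_range (fun n => overlap (u k) (u (k + 1)) (v n) (v (n + 1))) N]
  exact sum_range_overlap hv (hu (Nat.le_succ _)) (h0 ▸ hu (Nat.zero_le _)) (hK ▸ hu k.isLt)

lemma Monotone.le_of_le_of_lt_succ {α : Type*} [Preorder α] {u : ℕ → α} (hu : Monotone u)
    {i j : ℕ} {p : α} (hi : u i ≤ p) (hj : p < u (j + 1)) : i ≤ j :=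
  not_lt.mp fun hlt => (hj.trans_le (hi.trans' (hu hlt))).false

lemma card_filter_overlap_pos_le (K N : ℕ) {u v : ℕ → ℝ} (hu : Monotone u) (hv : Monotone v)
    (h0 : u 0 = v 0) :
    #{p : Fin K × Fin N | 0 < overlap (u p.1) (u (p.1 + 1)) (v p.2) (v (p.2 + 1))}
      ≤ K + N - 1 := by
  rcases N with _ | N
  · simp
  refine (card_le_card_of_injOn (fun p => max (u p.1) (v p.2))
    (t := (range K).image u ∪ (Ico 1 (N + 1)).image v) ?_ ?_).trans ?_
  · rintro ⟨i, j⟩ -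
    simp only [coe_union, coe_image, coe_range, coe_Ico, Set.mem_union, Set.mem_image,
      Set.mem_Iio, Set.mem_Ico]
    rcases max_choice (u i) (v j) with h | h <;> rw [h]
    · exact .inl ⟨i, i.isLt, rfl⟩
    · rcases Nat.eq_zero_or_pos j with hj | hj
      · exact .inl ⟨0, i.pos, by rw [h0, ← hj]⟩
      · exact .inr ⟨j, ⟨hj, j.isLt⟩, rfl⟩
  · rintro ⟨i, j⟩ hp ⟨i', j'⟩ hp' heq
    simp only [coe_filter, mem_univ, true_and, Set.mem_ofPred_eq, overlap_pos_iff,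
      lt_min_iff] at hp hp' heq
    have hi := hu.le_of_le_of_lt_succ (le_max_left _ _) (heq ▸ hp'.1)
    have hi' := hu.le_of_le_of_lt_succ (le_max_left _ _) (heq ▸ hp.1)
    have hj := hv.le_of_le_of_lt_succ (le_max_right _ _) (heq ▸ hp'.2)
    have hj' := hv.le_of_le_of_lt_succ (le_max_right _ _) (heq ▸ hp.2)
    ext <;> simp only <;> omega
  · calc _ ≤ #((range K).image u) + #((Ico 1 (N + 1)).image v) := card_union_le _ _
      _ ≤ K + N := add_le_add (card_image_le.trans (card_range K).le)
          (card_image_le.trans (by simp))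
      _ = K + (N + 1) - 1 := by omega

lemma card_filter_overlap_pos_le_two (N : ℕ) {v : ℕ → ℝ} (hv : Monotone v) {a b : ℝ}
    (hlen : ∀ j, b - a ≤ v (j + 1) - v j) :
    #{j : Fin N | 0 < overlap a b (v j) (v (j + 1))} ≤ 2 := by
  have hnear : ∀ i j : Fin N, 0 < overlap a b (v i) (v (i + 1)) →
      0 < overlap a b (v j) (v (j + 1)) → (j : ℕ) ≤ i + 1 := by
    intro i j hi hj
    simp only [overlap_pos_iff, max_lt_iff, lt_min_iff] at hi hj
    by_contra! hfar
    linarith [hlen (i + 1), hv (show (i : ℕ) + 1 + 1 ≤ j by omega)]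
  by_contra! h
  obtain ⟨i, j, k, hi, hj, hk, hij, hik, hjk⟩ := two_lt_card_iff.mp h
  simp only [mem_filter, mem_univ, true_and] at hi hj hk
  have := hnear i j hi hj; have := hnear j i hj hi; have := hnear i k hi hk
  have := hnear k i hk hi; have := hnear j k hj hk; have := hnear k j hk hj
  omega

lemma sum_filter_fst_eq {α β M : Type*} [Fintype α] [Fintype β] [DecidableEq α]
    [AddCommMonoid M] (w : α × β → M) (a : α) : ∑ p with p.1 = a, w p = ∑ b, w (a, b) := by
  rw [sum_filter, Fintype.sum_prod_type, sum_comm]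
  simp

lemma sum_filter_snd_eq {α β M : Type*} [Fintype α] [Fintype β] [DecidableEq β]
    [AddCommMonoid M] (w : α × β → M) (b : β) : ∑ p with p.2 = b, w p = ∑ a, w (a, b) := by
  rw [sum_filter, Fintype.sum_prod_type]
  simp

lemma sum_filter_equivFin_symm {α β M : Type*} [DecidableEq β] [AddCommMonoid M]
    (S : Finset α) (g : α → β) (F : α → M) (b : β) :
    ∑ i with g (S.equivFin.symm i) = b, F (S.equivFin.symm i) = ∑ a ∈ S with g a = b, F a := by
  rw [sum_filter, sum_filter, Equiv.sum_comp S.equivFin.symm (fun a => if g a = b then F a else 0)]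
  exact sum_coe_sort S (fun a => if g a = b then F a else 0)

theorem exists_splitting_of_sparse_plan {K N : ℕ} (w : Fin K × Fin N → ℝ) (hw : ∀ p, 0 ≤ w p)
    (x : Fin K → ℝ) (hx : ∀ k, 0 < x k) (c : ℝ)
    (hrow : ∀ k, ∑ n, w (k, n) = x k) (hcol : ∀ n, ∑ k, w (k, n) = c)
    (hsupp : #{p | 0 < w p} ≤ K + N - 1) (hrow_supp : ∀ k, #{n | 0 < w (k, n)} ≤ 2) :
    ∃ (K' : ℕ), K ≤ K' ∧ K' ≤ K + N - 1 ∧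
      ∃ (x' : Fin K' → ℝ) (f : Fin K' → Fin K) (P : Fin K' → Fin N),
        (∀ i, 0 < x' i) ∧
        (∀ k, ∑ i with f i = k, x' i = x k) ∧ (∀ k, #{i | f i = k} ≤ 2) ∧
        (∀ n, ∑ i with P i = n, x' i = c) := by
  set S : Finset (Fin K × Fin N) := {p | 0 < w p}
  have hsum (q : Fin K × Fin N → Prop) [DecidablePred q] :
      ∑ p ∈ S with q p, w p = ∑ p with q p, w p := by
    rw [filter_comm]
    exact sum_filter_of_ne fun p _ hp => (hw p).lt_of_ne' hp
  have hK : K ≤ #S := by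
    refine (card_fin K).symm.trans_le (card_le_card_of_surjOn Prod.fst fun k _ => ?_)
    obtain ⟨n, -, hn⟩ := exists_lt_of_sum_lt (s := univ) (f := 0) (g := fun n => w (k, n))
      (by simpa [hrow k] using hx k)
    exact ⟨(k, n), by simpa [S] using hn, rfl⟩
  refine ⟨#S, hK, hsupp, fun i => w (S.equivFin.symm i),
    fun i => (S.equivFin.symm i).1.1, fun i => (S.equivFin.symm i).1.2,
    fun i => (mem_filter.mp (S.equivFin.symm i).2).2, fun k => ?_, fun k => ?_, fun n => ?_⟩
  · rw [sum_filter_equivFin_symm S (·.1) w, hsum, sum_filter_fst_eq, hrow]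
  · rw [card_eq_sum_ones, sum_filter_equivFin_symm S (·.1) (fun _ => 1), filter_comm, sum_filter,
      sum_filter_fst_eq, ← card_filter]
    exact hrow_supp k
  · rw [sum_filter_equivFin_symm S (·.2) w, hsum, sum_filter_snd_eq, hcol]

lemma exists_monotone_partial_sums {K : ℕ} (x : Fin K → ℝ) (hx : ∀ k, 0 ≤ x k) :
    ∃ s : ℕ → ℝ, Monotone s ∧ s 0 = 0 ∧ s K = ∑ k, x k ∧ ∀ k : Fin K, s (k + 1) - s k = x k := by
  set y : ℕ → ℝ := fun j => if h : j < K then x ⟨j, h⟩ else 0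
  have hy : ∀ j, 0 ≤ y j := fun j => by
    simp only [y]; split_ifs
    exacts [hx _, le_rfl]
  refine ⟨fun m => ∑ j ∈ range m, y j, monotone_nat_of_le_succ fun m => ?_, sum_range_zero y,
    ?_, fun k => ?_⟩
  · simpa [sum_range_succ] using hy m
  · simp only
    rw [← Fin.sum_univ_eq_sum_range y K]
    simp [y]
  · simp [sum_range_succ, y]

/-- Splitting into a symmetric sum partition: if no user is oversized, the
requirements `x` can be refined into `K'` virtual users (`K ≤ K' ≤ K + N − 1`),
each original user split into at most two virtual users whose requirements sum
to the original, such that the virtual users can be partitioned into `N` groups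
each summing to `x_tot / N`. -/
theorem symmetric_sum_partition_exists (N K : ℕ) (hN : 0 < N)
    (x : Fin K → ℝ) (hx : ∀ k, 0 < x k)
    (hno : ∀ k, (N : ℝ) * x k ≤ ∑ j, x j) :
    ∃ (K' : ℕ), K ≤ K' ∧ K' ≤ K + N - 1 ∧
      ∃ (x' : Fin K' → ℝ) (f : Fin K' → Fin K) (P : Fin K' → Fin N),
        (∀ i, 0 < x' i) ∧
        (∀ k : Fin K, ∑ i ∈ Finset.univ.filter fun i => f i = k, x' i = x k) ∧
        (∀ k : Fin K, (Finset.univ.filter fun i => f i = k).card ≤ 2) ∧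
        (∀ n : Fin N, ∑ i ∈ Finset.univ.filter fun i => P i = n, x' i
            = (∑ j, x j) / N) := by
  obtain ⟨s, hs, hs0, hsK, hsx⟩ := exists_monotone_partial_sums x fun k => (hx k).le
  set c := (∑ j, x j) / N
  have hc : 0 ≤ c := div_nonneg (sum_nonneg fun k _ => (hx k).le) N.cast_nonneg
  have hxc (k : Fin K) : x k ≤ c := (le_div_iff₀ (Nat.cast_pos.mpr hN)).mpr (by linarith [hno k])
  set t : ℕ → ℝ := fun n => n * c
  have ht : Monotone t := fun i j hij => mul_le_mul_of_nonneg_right (Nat.cast_le.mpr hij) hc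
  have hst0 : s 0 = t 0 := by simp [t, hs0]
  have hstN : s K = t N := by simp only [t, c, hsK]; field_simp
  have htc (n : ℕ) : t (n + 1) - t n = c := by simp only [t]; push_cast; ring
  refine exists_splitting_of_sparse_plan
    (fun p => overlap (s p.1) (s (p.1 + 1)) (t p.2) (t (p.2 + 1))) (fun p => overlap_nonneg ..)
    x hx c (fun k => ?_) (fun n => ?_) (card_filter_overlap_pos_le K N hs ht hst0)
    (fun k => card_filter_overlap_pos_le_two (a := s k) (b := s (k + 1)) N ht fun n => ?_)
  · rw [sum_overlap_eq_sub hs ht hst0 hstN k, hsx k]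
  · simp_rw [overlap_comm (s _)]
    rw [sum_overlap_eq_sub ht hs hst0.symm hstN.symm n, htc]
  · rw [hsx k, htc]
    exact hxc k
end

section
/- Fix N ≥ 2 and let K = 2N − 1 users have equal powers p_k = p_tot/K for some p_tot > 0. For any assignment of unit vectors s₁, …, s_K ∈ ℝ^N in which at least two users share the same vector, the matrix A = I_N + N·Σ_k p_k s_k s_kᵀ has largest eigenvalue strictly greater than 1 + p_tot, and consequently det(A) < (1 + p_tot)^N. -/
/-!
Since `s k = s l`, the rank-one term of the shared vector enters `A` twice, so the Rayleigh
quotient of `A` at `s k` is at least `1 + 2N·p_tot/K = 1 + 2N·p_tot/(2N - 1) > 1 + p_tot`; hence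
some eigenvalue exceeds `1 + p_tot`. On the other hand `trace A = N(1 + p_tot)`, so the
eigenvalues of the positive semidefinite matrix `A` are nonnegative, average `1 + p_tot` and are
not all equal, and strict AM–GM gives `det A < (1 + p_tot)^N`.
-/

open Matrix

open scoped MatrixOrder in
theorem Matrix.IsHermitian.exists_lt_eigenvalues_of_lt_dotProduct_mulVec {n : Type*} [Fintype n]
    [DecidableEq n] {A : Matrix n n ℝ} (hA : A.IsHermitian) {c : ℝ} (x : n → ℝ)
    (hx : c * (x ⬝ᵥ x) < x ⬝ᵥ A *ᵥ x) : ∃ i, c < hA.eigenvalues i := by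
  by_contra! h
  have hle : A ≤ algebraMap ℝ _ c :=
    le_algebraMap_of_spectrum_le (by simpa [hA.spectrum_real_eq_range_eigenvalues] using h) hA
  have hquad := (le_iff.mp hle).dotProduct_mulVec_nonneg x
  simp only [Algebra.algebraMap_eq_smul_one, sub_mulVec, smul_mulVec, one_mulVec, dotProduct_sub,
    dotProduct_smul, smul_eq_mul, star_trivial] at hquad
  linarith

theorem Real.prod_lt_pow_card_of_sum_eq {ι : Type*} [Fintype ι] {z : ι → ℝ} (hz : ∀ i, 0 ≤ z i)
    {c : ℝ} (hsum : ∑ i, z i = Fintype.card ι * c) {j : ι} (hj : z j ≠ c) :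
    ∏ i, z i < c ^ Fintype.card ι := by
  have hn : (0 : ℝ) < Fintype.card ι := by exact_mod_cast Fintype.card_pos_iff.mpr ⟨j⟩
  have hmean : ∑ i, (Fintype.card ι : ℝ)⁻¹ * z i = c := by
    rw [← Finset.mul_sum, hsum, inv_mul_cancel_left₀ hn.ne']
  have hamgm := (Real.geom_mean_lt_arith_mean_weighted_iff_of_pos' Finset.univ
    (fun _ => (Fintype.card ι : ℝ)⁻¹) z (fun _ _ => inv_pos.mpr hn) (by simp [hn.ne'])
    (fun i _ => hz i)).mpr ⟨j, Finset.mem_univ _, hmean ▸ hj⟩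
  rw [hmean] at hamgm
  calc ∏ i, z i = (∏ i, z i ^ (Fintype.card ι : ℝ)⁻¹) ^ Fintype.card ι := by
        rw [← Finset.prod_pow]
        refine Finset.prod_congr rfl fun i _ => ?_
        rw [← Real.rpow_mul_natCast (hz i), inv_mul_cancel₀ hn.ne', Real.rpow_one]
    _ < c ^ Fintype.card ι :=
        pow_lt_pow_left₀ hamgm (Finset.prod_nonneg fun i _ => by have := hz i; positivity)
          (Fintype.card_pos_iff.mpr ⟨j⟩).ne'

theorem Matrix.PosSemidef.det_lt_pow_of_trace_eq {n : Type*} [Fintype n] [DecidableEq n]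
    {A : Matrix n n ℝ} (hA : A.PosSemidef) {c : ℝ} (htr : A.trace = Fintype.card n * c) {i : n}
    (hi : hA.1.eigenvalues i ≠ c) : A.det < c ^ Fintype.card n := by
  rw [hA.1.det_eq_prod_eigenvalues]
  rw [hA.1.trace_eq_sum_eigenvalues] at htr
  exact Real.prod_lt_pow_card_of_sum_eq hA.eigenvalues_nonneg htr hi

theorem Matrix.dotProduct_sum_vecMulVec_self_mulVec {ι n R : Type*} [Fintype ι] [Fintype n]
    [CommSemiring R] (s : ι → n → R) (x : n → R) :
    x ⬝ᵥ (∑ j, vecMulVec (s j) (s j)) *ᵥ x = ∑ j, (s j ⬝ᵥ x) ^ 2 := by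
  rw [sum_mulVec, dotProduct_sum]
  simp only [vecMulVec_mulVec, op_smul_eq_smul, smul_dotProduct, smul_eq_mul, dotProduct_comm x,
    sq]

theorem Matrix.posSemidef_sum_vecMulVec_self {ι n : Type*} [Fintype ι] [Fintype n]
    (s : ι → n → ℝ) : (∑ j, vecMulVec (s j) (s j)).PosSemidef :=
  posSemidef_sum _ fun j _ => by simpa using posSemidef_vecMulVec_self_star (s j)

theorem two_le_sum_sq_dotProduct_of_eq {ι n : Type*} [Fintype ι] [Fintype n] (s : ι → n → ℝ)
    {k l : ι} (hkl : k ≠ l) (hshare : s k = s l) (hunit : s k ⬝ᵥ s k = 1) :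
    2 ≤ ∑ j, (s j ⬝ᵥ s k) ^ 2 := by
  classical
  calc (2 : ℝ) = ∑ j ∈ {k, l}, (s j ⬝ᵥ s k) ^ 2 := by
        rw [Finset.sum_pair hkl, ← hshare, hunit]; norm_num
    _ ≤ ∑ j, (s j ⬝ᵥ s k) ^ 2 :=
        Finset.sum_le_sum_of_subset_of_nonneg (Finset.subset_univ _) fun j _ _ => sq_nonneg _

theorem shared_sequence_suboptimal_general (N : ℕ) (K : ℕ)
    (hK : K = 2 * N - 1) (ptot : ℝ) (hptot : 0 < ptot)
    (s : Fin K → Fin N → ℝ) (hunit : ∀ k, s k ⬝ᵥ s k = 1)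
    (k l : Fin K) (hkl : k ≠ l) (hshare : s k = s l)
    (A : Matrix (Fin N) (Fin N) ℝ)
    (hAdef : A = 1 + (N : ℝ) • ∑ j, (ptot / K) • Matrix.vecMulVec (s j) (s j))
    (hA : A.IsHermitian) :
    (∃ i : Fin N, 1 + ptot < hA.eigenvalues i) ∧ A.det < (1 + ptot) ^ N := by
  have hKR : (K : ℝ) = 2 * N - 1 := by
    have hN : 1 ≤ N := by have := k.pos; omega
    rw [hK, Nat.cast_sub (by omega)]
    push_cast
    ring
  have hK0 : (0 : ℝ) < K := by exact_mod_cast k.pos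
  have hA' : A = 1 + (N * (ptot / K)) • ∑ j, vecMulVec (s j) (s j) := by
    rw [hAdef, ← Finset.smul_sum, smul_smul]
  have hApsd : A.PosSemidef := hA' ▸
    PosSemidef.one.add ((posSemidef_sum_vecMulVec_self s).smul (by positivity))
  have htr : A.trace = Fintype.card (Fin N) * (1 + ptot) := by
    simp only [hA', trace_add, trace_one, trace_smul, trace_sum, trace_vecMulVec, hunit,
      Finset.sum_const, Finset.card_univ, Fintype.card_fin, nsmul_eq_mul, smul_eq_mul]
    field_simp
  have hquad : (1 + ptot) * (s k ⬝ᵥ s k) < s k ⬝ᵥ A *ᵥ s k := by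
    have h2 := two_le_sum_sq_dotProduct_of_eq s hkl hshare (hunit k)
    rw [hA', add_mulVec, one_mulVec, smul_mulVec, dotProduct_add, dotProduct_smul,
      dotProduct_sum_vecMulVec_self_mulVec, hunit k, smul_eq_mul]
    have hdouble : ptot < N * (ptot / K) * 2 := by
      rw [mul_div_assoc', div_mul_eq_mul_div, lt_div_iff₀ hK0, hKR]
      nlinarith
    nlinarith
  obtain ⟨i, hi⟩ := hA.exists_lt_eigenvalues_of_lt_dotProduct_mulVec (s k) hquad
  refine ⟨⟨i, hi⟩, ?_⟩
  simpa using hApsd.det_lt_pow_of_trace_eq htr hi.ne'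

/-- Necessity of `2N − 1` sequences: with `K = 2N − 1` users of equal power
`p_tot/K`, any sequence assignment in which two users share a sequence yields a
signal-plus-interference matrix with largest eigenvalue exceeding `1 + p_tot`,
hence `det A < (1 + p_tot)^N`. -/
theorem shared_sequence_suboptimal (N : ℕ) (hN : 2 ≤ N) (K : ℕ)
    (hK : K = 2 * N - 1) (ptot : ℝ) (hptot : 0 < ptot)
    (s : Fin K → Fin N → ℝ) (hunit : ∀ k, s k ⬝ᵥ s k = 1)
    (k l : Fin K) (hkl : k ≠ l) (hshare : s k = s l)
    (A : Matrix (Fin N) (Fin N) ℝ)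
    (hAdef : A = 1 + (N : ℝ) • ∑ j, (ptot / K) • Matrix.vecMulVec (s j) (s j))
    (hA : A.IsHermitian) :
    (∃ i : Fin N, 1 + ptot < hA.eigenvalues i) ∧ A.det < (1 + ptot) ^ N :=
  shared_sequence_suboptimal_general N K hK ptot hptot s hunit k l hkl hshare A hAdef hA
end
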